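/- arXiv:1610.07925 — 3 statements merged into one kernel-verified Lean document; each statement's English description precedes it below -/
import Mathlib

section
/- For a univariate random variable X with continuous distribution function F and finite first moment, the Gini mean difference satisfies E|X1 - X2| = 4 Cov(X, F(X)), where X1, X2 are independent copies of X. -/
/-!
Split `|x - y| = 2 · 1{y ≤ x} (x - y) - (x - y)`. The last term has mean zero, and Fubini turns
`E[1{X₂ ≤ X₁} X₁]` into `E[X F(X)]` and `E[1{X₂ ≤ X₁} X₂]` into `E[X ν[X, ∞)] = E[X (1 - F(X))]`,
the latter because a continuous `F` leaves `ν` without atoms. The same computation with the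
integrand `1` gives `E F(X) = E (1 - F(X))`, i.e. `E F(X) = 1 / 2`.
-/

open MeasureTheory Set ProbabilityTheory

section Fubini

variable {α β : Type*} [MeasurableSpace α] [MeasurableSpace β] {μ : Measure α} {ν : Measure β}
  {s : Set (α × β)}

theorem integral_indicator_comp_fst [SFinite μ] [IsFiniteMeasure ν] (hs : MeasurableSet s)
    {g : α → ℝ} (hg : Integrable g μ) :
    ∫ p, s.indicator (fun p => g p.1) p ∂(μ.prod ν) = ∫ x, ν.real (Prod.mk x ⁻¹' s) * g x ∂μ := by
  rw [integral_prod _ ((hg.comp_fst ν).indicator hs)]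
  refine integral_congr_ae (ae_of_all _ fun x => ?_)
  change ∫ y, (Prod.mk x ⁻¹' s).indicator (fun _ => g x) y ∂ν = _
  rw [integral_indicator (measurable_prodMk_left hs), setIntegral_const, smul_eq_mul]

theorem integral_indicator_comp_snd [IsFiniteMeasure μ] [SFinite ν] (hs : MeasurableSet s)
    {g : β → ℝ} (hg : Integrable g ν) :
    ∫ p, s.indicator (fun p => g p.2) p ∂(μ.prod ν) =
      ∫ y, μ.real ((fun x => (x, y)) ⁻¹' s) * g y ∂ν := by
  rw [integral_prod_symm _ ((hg.comp_snd μ).indicator hs)]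
  refine integral_congr_ae (ae_of_all _ fun y => ?_)
  change ∫ x, ((fun x => (x, y)) ⁻¹' s).indicator (fun _ => g y) x ∂μ = _
  rw [integral_indicator (measurable_prodMk_right hs), setIntegral_const, smul_eq_mul]

end Fubini

section RealLine

variable {ν : Measure ℝ} [IsProbabilityMeasure ν]

theorem integral_abs_sub_prod_self (hint : Integrable (fun x => x) ν) :
    ∫ p : ℝ × ℝ, |p.1 - p.2| ∂(ν.prod ν) =
      2 * (∫ x, ν.real (Iic x) * x ∂ν - ∫ x, ν.real (Ici x) * x ∂ν) := by
  set s : Set (ℝ × ℝ) := {p | p.2 ≤ p.1}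
  have hs : MeasurableSet s := measurableSet_le measurable_snd measurable_fst
  have hfst : Integrable (fun p : ℝ × ℝ => p.1) (ν.prod ν) := hint.comp_fst ν
  have hsnd : Integrable (fun p : ℝ × ℝ => p.2) (ν.prod ν) := hint.comp_snd ν
  have hsplit : ∀ p : ℝ × ℝ, |p.1 - p.2| =
      2 * (s.indicator (fun p => p.1) p - s.indicator (fun p => p.2) p) - (p.1 - p.2) := by
    intro p
    by_cases h : p ∈ s
    · rw [indicator_of_mem h, indicator_of_mem h, abs_of_nonneg (sub_nonneg.2 h)]
      ring
    · rw [indicator_of_notMem h, indicator_of_notMem h, abs_of_neg (sub_neg.2 (not_le.1 h))]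
      ring
  have hmean : ∫ p : ℝ × ℝ, (p.1 - p.2) ∂(ν.prod ν) = 0 := by
    rw [integral_sub hfst hsnd, integral_fun_fst (fun x => x), integral_fun_snd (fun x => x)]
    simp
  rw [integral_congr_ae (ae_of_all _ hsplit), integral_sub, integral_const_mul, integral_sub, hmean,
    sub_zero, integral_indicator_comp_fst hs hint, integral_indicator_comp_snd hs hint]
  -- the slices of `s` are `Iic x` and `Ici y` by definition
  · rfl
  · exact hfst.indicator hs
  · exact hsnd.indicator hs
  · exact ((hfst.indicator hs).sub (hsnd.indicator hs)).const_mul 2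
  · exact hfst.sub hsnd

theorem ProbabilityTheory.nullSingletonClass_of_continuous_cdf (h : Continuous (cdf ν)) :
    NullSingletonClass ν where
  measure_singleton a := by
    rw [← measure_cdf ν, StieltjesFunction.measure_singleton, h.continuousWithinAt.leftLim_eq,
      sub_self, ENNReal.ofReal_zero]

theorem measureReal_Ici_eq_one_sub [NullSingletonClass ν] (x : ℝ) :
    ν.real (Ici x) = 1 - ν.real (Iic x) := by
  rw [← compl_Iio, probReal_compl_eq_one_sub measurableSet_Iio, measureReal_congr Iio_ae_eq_Iic]

theorem integrable_measureReal_Iic_mul {g : ℝ → ℝ} (hg : Integrable g ν) :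
    Integrable (fun x => ν.real (Iic x) * g x) ν :=
  hg.bdd_mul (c := 1)
    (Monotone.measurable fun _ _ h => measureReal_mono (Iic_subset_Iic.2 h)).aestronglyMeasurable
    (ae_of_all _ fun x => by rw [Real.norm_of_nonneg measureReal_nonneg]; exact measureReal_le_one)

theorem integral_measureReal_Iic [NullSingletonClass ν] : ∫ x, ν.real (Iic x) ∂ν = 1 / 2 := by
  have hs : MeasurableSet {p : ℝ × ℝ | p.2 ≤ p.1} := measurableSet_le measurable_snd measurable_fst
  have hone : Integrable (fun _ => (1 : ℝ)) ν := integrable_const 1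
  have hint : Integrable (fun x => ν.real (Iic x)) ν := by
    simpa using integrable_measureReal_Iic_mul hone
  have hsymm : ∫ x, ν.real (Iic x) ∂ν = 1 - ∫ x, ν.real (Iic x) ∂ν :=
    calc ∫ x, ν.real (Iic x) ∂ν = ∫ x, ν.real (Ici x) ∂ν := by
          have h := (integral_indicator_comp_fst (ν := ν) hs hone).symm.trans
            (integral_indicator_comp_snd (μ := ν) hs hone)
          simp only [mul_one] at h
          exact h
      _ = ∫ x, (1 - ν.real (Iic x)) ∂ν := by simp_rw [measureReal_Ici_eq_one_sub]
      _ = 1 - ∫ x, ν.real (Iic x) ∂ν := by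
          rw [integral_sub hone hint, integral_const, probReal_univ, one_smul]
  linarith

end RealLine

/-- For a univariate random variable with continuous distribution function `F` and finite
first moment, the Gini mean difference satisfies `E|X₁ - X₂| = 4 Cov(X, F(X))`. -/
theorem gini_eq_four_cov
    (ν : Measure ℝ) [IsProbabilityMeasure ν]
    (F : ℝ → ℝ) (hF : ∀ x, F x = (ν (Set.Iic x)).toReal)
    (hFcont : Continuous F)
    (hint : Integrable (fun x => x) ν) :
    ∫ p : ℝ × ℝ, |p.1 - p.2| ∂(ν.prod ν) =
      4 * ((∫ x, x * F x ∂ν) - (∫ x, x ∂ν) * (∫ x, F x ∂ν)) := by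
  obtain rfl : F = fun x => ν.real (Iic x) := funext hF
  have : NullSingletonClass ν :=
    nullSingletonClass_of_continuous_cdf (by rwa [funext (cdf_eq_real ν)])
  have hxF : Integrable (fun x => ν.real (Iic x) * x) ν := integrable_measureReal_Iic_mul hint
  simp_rw [integral_abs_sub_prod_self hint, measureReal_Ici_eq_one_sub, sub_mul, one_mul,
    integral_sub hint hxF, integral_measureReal_Iic, mul_comm _ (ν.real _)]
  ring
end

section
/- The influence function of the Gini covariance matrix at F is IF(x; Σ_g, F) = 2 E[(X1 - x)(X1 - x)^T / ||X1 - x||] - 2 Σ_g(F); that is, for the contaminated distribution F_ε = (1-ε)F + ε δ_x, one has Σ_g(F_ε) = (1-ε)² Σ_g(F) + 2ε(1-ε) E[(X1-x)(X1-x)^T/||X1-x||], and its derivative in ε at ε = 0 equals the stated influence function. -/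
/-!
Write `K(y, z)` for the Gini kernel evaluated at `y - z`. The product of the mixture
`F_ε = (1-ε)F + εδ_x` with itself splits bilinearly into four pieces: `F ⊗ F` with weight
`(1-ε)²`, the two cross terms `F ⊗ δ_x` and `δ_x ⊗ F` with weight `ε(1-ε)` each, which both
integrate `K` to `E[K(X₁, x)]` because the kernel is even, and `δ_x ⊗ δ_x`, which contributes
`K(x, x) = 0`. Every piece is integrable since `|K(y, z)| ≤ ‖y‖ + ‖z‖` and `F` has a first
moment. The result is a quadratic polynomial in `ε`, whose derivative at `0` is read off.
-/

open MeasureTheory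

/-- The Gini covariance matrix of a distribution on `ℝᵈ` (entrywise). -/
noncomputable def giniCov {d : ℕ} (ν : Measure (EuclideanSpace ℝ (Fin d))) :
    Matrix (Fin d) (Fin d) ℝ :=
  Matrix.of fun i j =>
    ∫ p : EuclideanSpace ℝ (Fin d) × EuclideanSpace ℝ (Fin d),
      ((p.1 - p.2) i * (p.1 - p.2) j) / ‖p.1 - p.2‖ ∂(ν.prod ν)

open ENNReal

namespace MeasureTheory.Measure

variable {α : Type*} [MeasurableSpace α]

lemma mixture_prod_self (μ η : Measure α) [SFinite μ] [SFinite η] (a b : ℝ≥0∞) :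
    (a • μ + b • η).prod (a • μ + b • η) =
      (a * a) • μ.prod μ + (a * b) • (μ.prod η + η.prod μ) + (b * b) • η.prod η := by
  rw [add_prod, prod_add, prod_add]
  simp only [prod_smul_left, prod_smul_right, smul_smul, smul_add, mul_comm b a]
  abel

end MeasureTheory.Measure

section ProductIntegrals

variable {α β E : Type*} [MeasurableSpace α] [MeasurableSpace β]
  [NormedAddCommGroup E] [NormedSpace ℝ E]

theorem integral_mixture_prod_self {μ η : Measure α} [SFinite μ] [SFinite η] {f : α × α → E}
    (hμμ : Integrable f (μ.prod μ)) (hμη : Integrable f (μ.prod η))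
    (hημ : Integrable f (η.prod μ)) (hηη : Integrable f (η.prod η))
    {a b : ℝ≥0∞} (ha : a ≠ ∞) (hb : b ≠ ∞) :
    ∫ p, f p ∂(a • μ + b • η).prod (a • μ + b • η) =
      (a.toReal * a.toReal) • ∫ p, f p ∂μ.prod μ
        + (a.toReal * b.toReal) • (∫ p, f p ∂μ.prod η + ∫ p, f p ∂η.prod μ)
        + (b.toReal * b.toReal) • ∫ p, f p ∂η.prod η := by
  have hμμ' := hμμ.smul_measure (mul_ne_top ha ha)
  have hcross := (hμη.add_measure hημ).smul_measure (mul_ne_top ha hb)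
  have hηη' := hηη.smul_measure (mul_ne_top hb hb)
  rw [Measure.mixture_prod_self, integral_add_measure (hμμ'.add_measure hcross) hηη',
    integral_add_measure hμμ' hcross]
  simp only [integral_smul_measure, toReal_mul]
  rw [integral_add_measure hμη hημ]

theorem integral_prod_dirac {μ : Measure α} [SFinite μ] {f : α × β → E}
    (hf : StronglyMeasurable f) (y : β) :
    ∫ p, f p ∂μ.prod (Measure.dirac y) = ∫ x, f (x, y) ∂μ := by
  rw [Measure.prod_dirac, integral_map measurable_prodMk_right.aemeasurable
    hf.aestronglyMeasurable]

theorem integral_dirac_prod {ν : Measure β} [SFinite ν] {f : α × β → E}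
    (hf : StronglyMeasurable f) (x : α) :
    ∫ p, f p ∂(Measure.dirac x).prod ν = ∫ y, f (x, y) ∂ν := by
  rw [Measure.dirac_prod, integral_map measurable_prodMk_left.aemeasurable
    hf.aestronglyMeasurable]

end ProductIntegrals

theorem integrable_comp_sub_prod {E : Type*} [NormedAddCommGroup E] [MeasurableSpace E]
    [BorelSpace E] [SecondCountableTopology E] {g : E → ℝ} (hg : Measurable g)
    (hg_le : ∀ v, ‖g v‖ ≤ ‖v‖) {μ η : Measure E} [IsFiniteMeasure μ] [IsFiniteMeasure η]
    (hμ : Integrable (‖·‖) μ) (hη : Integrable (‖·‖) η) :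
    Integrable (fun p : E × E => g (p.1 - p.2)) (μ.prod η) :=
  Integrable.mono' ((hμ.comp_fst η).add (hη.comp_snd μ))
    (hg.comp measurable_sub).aestronglyMeasurable
    (ae_of_all _ fun _ => (hg_le _).trans (norm_sub_le _ _))

section GiniKernel

variable {ι : Type*} [Fintype ι]

noncomputable def giniKernel (i j : ι) (v : EuclideanSpace ℝ ι) : ℝ :=
  v i * v j / ‖v‖

variable (i j : ι)

lemma giniKernel_sub_comm (v w : EuclideanSpace ℝ ι) :
    giniKernel i j (v - w) = giniKernel i j (w - v) := by
  rw [giniKernel, giniKernel, ← norm_neg, neg_sub, PiLp.sub_apply, PiLp.sub_apply,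
    PiLp.sub_apply, PiLp.sub_apply]
  ring

lemma giniKernel_zero : giniKernel i j (0 : EuclideanSpace ℝ ι) = 0 := by
  simp [giniKernel]

lemma norm_giniKernel_le (v : EuclideanSpace ℝ ι) : ‖giniKernel i j v‖ ≤ ‖v‖ := by
  rcases eq_or_ne v 0 with rfl | hv
  · simp [giniKernel_zero]
  have hpos : 0 < ‖v‖ := norm_pos_iff.mpr hv
  rw [giniKernel, norm_div, norm_norm, div_le_iff₀ hpos, norm_mul]
  exact mul_le_mul (PiLp.norm_apply_le v i) (PiLp.norm_apply_le v j) (norm_nonneg _)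
    (norm_nonneg _)

lemma measurable_giniKernel : Measurable (giniKernel (ι := ι) i j) := by
  unfold giniKernel
  fun_prop

end GiniKernel

theorem giniCov_apply {d : ℕ} (ν : Measure (EuclideanSpace ℝ (Fin d)))
    (i j : Fin d) :
    giniCov ν i j = ∫ p, giniKernel i j (p.1 - p.2) ∂ν.prod ν :=
  rfl

theorem giniCov_mixture_dirac {d : ℕ} (ν : Measure (EuclideanSpace ℝ (Fin d)))
    [IsFiniteMeasure ν] (hint : Integrable (fun x => ‖x‖) ν) (x : EuclideanSpace ℝ (Fin d))
    {a b : ℝ} (ha : 0 ≤ a) (hb : 0 ≤ b) (i j : Fin d) :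
    giniCov (ENNReal.ofReal a • ν + ENNReal.ofReal b • Measure.dirac x) i j
      = a ^ 2 * giniCov ν i j + 2 * b * a * ∫ y, giniKernel i j (y - x) ∂ν := by
  have hK : StronglyMeasurable fun p : EuclideanSpace ℝ (Fin d) × EuclideanSpace ℝ (Fin d) =>
      giniKernel i j (p.1 - p.2) :=
    ((measurable_giniKernel i j).comp measurable_sub).stronglyMeasurable
  have hδ : Integrable (‖·‖) (Measure.dirac x) := integrable_dirac (by simp)
  have hK_int {μ η : Measure (EuclideanSpace ℝ (Fin d))} [IsFiniteMeasure μ] [IsFiniteMeasure η]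
      (hμ : Integrable (‖·‖) μ) (hη : Integrable (‖·‖) η) :=
    integrable_comp_sub_prod (measurable_giniKernel i j) (norm_giniKernel_le i j) hμ hη
  rw [giniCov_apply, giniCov_apply,
    integral_mixture_prod_self (hK_int hint hint) (hK_int hint hδ) (hK_int hδ hint)
      (hK_int hδ hδ) ofReal_ne_top ofReal_ne_top,
    integral_prod_dirac hK, integral_dirac_prod hK, integral_prod_dirac hK, integral_dirac,
    toReal_ofReal ha, toReal_ofReal hb]
  simp only [sub_self, giniKernel_zero, smul_eq_mul, giniKernel_sub_comm i j x]
  ring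

theorem hasDerivAt_mixture_quadratic (A B : ℝ) :
    HasDerivAt (fun ε : ℝ => (1 - ε) ^ 2 * A + 2 * ε * (1 - ε) * B) (2 * B - 2 * A) 0 := by
  have h₁ : HasDerivAt (fun ε : ℝ => 1 - ε) (-1) 0 := (hasDerivAt_id 0).const_sub 1
  have h₂ : HasDerivAt (fun ε : ℝ => 2 * ε) 2 0 := by
    simpa using (hasDerivAt_id (0 : ℝ)).const_mul 2
  exact (((h₁.pow 2).mul_const A).add ((h₂.mul h₁).mul_const B)).congr_deriv (by norm_num; ring)

theorem giniCov_influence_function_general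
    {d : ℕ} (ν : Measure (EuclideanSpace ℝ (Fin d))) [IsProbabilityMeasure ν]
    (hint : Integrable (fun x => ‖x‖) ν)
    (x : EuclideanSpace ℝ (Fin d)) :
    (∀ ε : ℝ, 0 ≤ ε → ε ≤ 1 → ∀ i j : Fin d,
      giniCov ((ENNReal.ofReal (1 - ε)) • ν + (ENNReal.ofReal ε) • Measure.dirac x) i j
        = (1 - ε) ^ 2 * giniCov ν i j
          + 2 * ε * (1 - ε) *
            ∫ y, ((y - x) i * (y - x) j) / ‖y - x‖ ∂ν) ∧
    (∀ i j : Fin d,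
      HasDerivWithinAt
        (fun ε : ℝ =>
          giniCov ((ENNReal.ofReal (1 - ε)) • ν + (ENNReal.ofReal ε) • Measure.dirac x) i j)
        (2 * (∫ y, ((y - x) i * (y - x) j) / ‖y - x‖ ∂ν) - 2 * giniCov ν i j)
        (Set.Ici (0 : ℝ)) 0) := by
  refine ⟨fun ε hε₀ hε₁ i j => giniCov_mixture_dirac ν hint x (sub_nonneg.2 hε₁) hε₀ i j,
    fun i j => ?_⟩
  refine (hasDerivAt_mixture_quadratic _ _).hasDerivWithinAt.congr_of_eventuallyEq ?_ ?_
  · filter_upwards [Icc_mem_nhdsGE zero_lt_one] with ε hε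
    exact giniCov_mixture_dirac ν hint x (sub_nonneg.2 hε.2) hε.1 i j
  · simp

/-- The influence function of the Gini covariance matrix:
for `F_ε = (1-ε)F + εδ_x` one has
`Σ_g(F_ε) = (1-ε)² Σ_g(F) + 2ε(1-ε) E[(X₁-x)(X₁-x)ᵀ/‖X₁-x‖]`, and its (right) derivative
in `ε` at `0` is `IF(x; Σ_g, F) = 2E[(X₁-x)(X₁-x)ᵀ/‖X₁-x‖] - 2Σ_g(F)`. -/
theorem giniCov_influence_function
    {d : ℕ} (ν : Measure (EuclideanSpace ℝ (Fin d))) [IsProbabilityMeasure ν]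
    (hcont : ∀ y, ν {y} = 0)
    (hint : Integrable (fun x => ‖x‖) ν)
    (x : EuclideanSpace ℝ (Fin d)) :
    (∀ ε : ℝ, 0 ≤ ε → ε ≤ 1 → ∀ i j : Fin d,
      giniCov ((ENNReal.ofReal (1 - ε)) • ν + (ENNReal.ofReal ε) • Measure.dirac x) i j
        = (1 - ε) ^ 2 * giniCov ν i j
          + 2 * ε * (1 - ε) *
            ∫ y, ((y - x) i * (y - x) j) / ‖y - x‖ ∂ν) ∧
    (∀ i j : Fin d,
      HasDerivWithinAt
        (fun ε : ℝ =>
          giniCov ((ENNReal.ofReal (1 - ε)) • ν + (ENNReal.ofReal ε) • Measure.dirac x) i j)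
        (2 * (∫ y, ((y - x) i * (y - x) j) / ‖y - x‖ ∂ν) - 2 * giniCov ν i j)
        (Set.Ici (0 : ℝ)) 0) :=
  giniCov_influence_function_general ν hint x
end

section
/- Any symmetrized, orthogonally equivariant scatter functional has the block independence property. In particular, if X^T = (X1^T, X2^T) has two independent blocks of dimensions d1 and d2 (d1 + d2 = d), then the Gini covariance matrix Σ_g(X) = E[(Y1-Y2)(Y1-Y2)^T/||Y1-Y2||] (Y1, Y2 i.i.d. copies of X) is block diagonal: its off-diagonal d1×d2 block is zero. -/
open MeasureTheory

/-- The shuffle `(A × B) × (C × D) ≃ᵐ (A × C) × (B × D)` as a measurable equiv. -/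
def shuffleEquiv {A B C D : Type*} [MeasurableSpace A] [MeasurableSpace B]
    [MeasurableSpace C] [MeasurableSpace D] :
    ((A × B) × (C × D)) ≃ᵐ ((A × C) × (B × D)) :=
  MeasurableEquiv.prodAssoc.trans <|
    ((MeasurableEquiv.refl A).prodCongr MeasurableEquiv.prodAssoc.symm).trans <|
      ((MeasurableEquiv.refl A).prodCongr
        ((MeasurableEquiv.prodComm : B × C ≃ᵐ C × B).prodCongr (MeasurableEquiv.refl D))).trans <|
        ((MeasurableEquiv.refl A).prodCongr MeasurableEquiv.prodAssoc).trans
          MeasurableEquiv.prodAssoc.symm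

theorem shuffleEquiv_measurePreserving {A B C D : Type*} [MeasurableSpace A] [MeasurableSpace B]
    [MeasurableSpace C] [MeasurableSpace D]
    (μa : Measure A) (μb : Measure B) (μc : Measure C) (μd : Measure D)
    [SigmaFinite μa] [SigmaFinite μb] [SigmaFinite μc] [SigmaFinite μd] :
    MeasurePreserving (shuffleEquiv (A := A) (B := B) (C := C) (D := D))
      ((μa.prod μb).prod (μc.prod μd)) ((μa.prod μc).prod (μb.prod μd)) := by
  have h1 : MeasurePreserving (MeasurableEquiv.prodAssoc : (A × B) × (C × D) ≃ᵐ A × B × C × D)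
      ((μa.prod μb).prod (μc.prod μd)) (μa.prod (μb.prod (μc.prod μd))) :=
    measurePreserving_prodAssoc _ _ _
  have h2 : MeasurePreserving
      ((MeasurableEquiv.refl A).prodCongr
        (MeasurableEquiv.prodAssoc.symm : B × C × D ≃ᵐ (B × C) × D))
      (μa.prod (μb.prod (μc.prod μd))) (μa.prod ((μb.prod μc).prod μd)) :=
    (MeasurePreserving.id μa).prod
      ((measurePreserving_prodAssoc μb μc μd).symm MeasurableEquiv.prodAssoc)
  have h3 : MeasurePreserving
      ((MeasurableEquiv.refl A).prodCongr
        ((MeasurableEquiv.prodComm : B × C ≃ᵐ C × B).prodCongr (MeasurableEquiv.refl D)))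
      (μa.prod ((μb.prod μc).prod μd)) (μa.prod ((μc.prod μb).prod μd)) :=
    (MeasurePreserving.id μa).prod
      ((Measure.measurePreserving_swap (μ := μb) (ν := μc)).prod (MeasurePreserving.id μd))
  have h4 : MeasurePreserving
      ((MeasurableEquiv.refl A).prodCongr (MeasurableEquiv.prodAssoc : (C × B) × D ≃ᵐ C × B × D))
      (μa.prod ((μc.prod μb).prod μd)) (μa.prod (μc.prod (μb.prod μd))) :=
    (MeasurePreserving.id μa).prod (measurePreserving_prodAssoc μc μb μd)
  have h5 : MeasurePreserving
      ((MeasurableEquiv.prodAssoc : (A × C) × (B × D) ≃ᵐ A × C × B × D).symm)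
      (μa.prod (μc.prod (μb.prod μd))) ((μa.prod μc).prod (μb.prod μd)) :=
    (measurePreserving_prodAssoc μa μc (μb.prod μd)).symm MeasurableEquiv.prodAssoc
  exact ((((h1.trans h2).trans h3).trans h4).trans h5 :)

/-- Block independence property of the Gini covariance matrix: if `X = (X₁, X₂)` has two
independent blocks (each with continuous distribution and finite first moment), then the
Gini covariance matrix of `X` is block diagonal: its off-diagonal `d₁ × d₂` block is `0`. -/
theorem giniCov_block_independence
    {d1 d2 : ℕ}
    (ν1 : Measure (Fin d1 → ℝ)) [IsProbabilityMeasure ν1]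
    (ν2 : Measure (Fin d2 → ℝ)) [IsProbabilityMeasure ν2]
    (hcont1 : ∀ x, ν1 {x} = 0) (hcont2 : ∀ x, ν2 {x} = 0)
    (hint1 : Integrable (fun x => Real.sqrt (∑ i, x i ^ 2)) ν1)
    (hint2 : Integrable (fun x => Real.sqrt (∑ j, x j ^ 2)) ν2) :
    ∀ (i : Fin d1) (j : Fin d2),
      ∫ p : ((Fin d1 → ℝ) × (Fin d2 → ℝ)) × ((Fin d1 → ℝ) × (Fin d2 → ℝ)),
          ((p.1.1 i - p.2.1 i) * (p.1.2 j - p.2.2 j)) /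
            Real.sqrt ((∑ a, (p.1.1 a - p.2.1 a) ^ 2) + (∑ b, (p.1.2 b - p.2.2 b) ^ 2))
          ∂((ν1.prod ν2).prod (ν1.prod ν2))
        = 0 := by
  intro i j
  set A := Fin d1 → ℝ
  set B := Fin d2 → ℝ
  -- the equiv ((a,b),(c,d)) ↦ ((c,b),(a,d))
  set E : ((A × B) × (A × B)) ≃ᵐ ((A × B) × (A × B)) :=
    (shuffleEquiv.trans
      ((MeasurableEquiv.prodComm : A × A ≃ᵐ A × A).prodCongr (MeasurableEquiv.refl (B × B)))).trans
        (shuffleEquiv (A := A) (B := A) (C := B) (D := B)) with hE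
  have hMP : MeasurePreserving E ((ν1.prod ν2).prod (ν1.prod ν2))
      ((ν1.prod ν2).prod (ν1.prod ν2)) := by
    have h1 := shuffleEquiv_measurePreserving ν1 ν2 ν1 ν2
    have h2 : MeasurePreserving
        ((MeasurableEquiv.prodComm : A × A ≃ᵐ A × A).prodCongr (MeasurableEquiv.refl (B × B)))
        ((ν1.prod ν1).prod (ν2.prod ν2)) ((ν1.prod ν1).prod (ν2.prod ν2)) :=
      (Measure.measurePreserving_swap (μ := ν1) (ν := ν1)).prod (MeasurePreserving.id _)
    have h3 := shuffleEquiv_measurePreserving ν1 ν1 ν2 ν2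
    exact (h1.trans h2).trans h3
  set f : ((A × B) × (A × B)) → ℝ := fun p =>
    ((p.1.1 i - p.2.1 i) * (p.1.2 j - p.2.2 j)) /
      Real.sqrt ((∑ a, (p.1.1 a - p.2.1 a) ^ 2) + (∑ b, (p.1.2 b - p.2.2 b) ^ 2)) with hf
  have hEapp : ∀ p : (A × B) × (A × B), E p = ((p.2.1, p.1.2), (p.1.1, p.2.2)) := by
    intro p; rfl
  have hneg : ∀ p, f (E p) = - f p := by
    intro p
    rw [hEapp]
    simp only [hf]
    have h1 : (∑ a, ((p.2.1 : A) a - p.1.1 a) ^ 2) = ∑ a, (p.1.1 a - p.2.1 a) ^ 2 :=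
      Finset.sum_congr rfl fun a _ => by ring
    rw [h1, ← neg_div]
    congr 1
    ring
  have key : ∫ p, f p ∂((ν1.prod ν2).prod (ν1.prod ν2))
      = ∫ p, f (E p) ∂((ν1.prod ν2).prod (ν1.prod ν2)) :=
    (hMP.integral_comp E.measurableEmbedding f).symm
  have key2 : ∫ p, f (E p) ∂((ν1.prod ν2).prod (ν1.prod ν2))
      = - ∫ p, f p ∂((ν1.prod ν2).prod (ν1.prod ν2)) := by
    simp_rw [hneg]
    exact integral_neg f
  have hgoal : ∫ p, f p ∂((ν1.prod ν2).prod (ν1.prod ν2)) = 0 := by linarith [key, key2]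
  exact hgoal
end
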